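/- Every set of polyominoes all of whose members have size 5 or larger is a loser in the weak (1,2)-achievement game. -/

import Mathlib

/-- A cell of the rectangular board. -/
abbrev Cell : Type := ℤ × ℤ

/-- Two cells are adjacent if they differ by (±1,0) or (0,±1). -/
def Adjacent (a b : Cell) : Prop :=
  (a.1 - b.1).natAbs + (a.2 - b.2).natAbs = 1

/-- A polyomino is a nonempty subset of ℤ² connected through adjacent cells. -/
def IsPolyomino (P : Set Cell) : Prop :=
  P.Nonempty ∧ ∀ a ∈ P, ∀ b ∈ P,
    Relation.ReflTransGen (fun x y => x ∈ P ∧ y ∈ P ∧ Adjacent x y) a b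

/-- Symmetries of the board: compositions of an integer translation with one of the
eight signed/swap linear maps (rotations by multiples of 90° and reflections). -/
def IsSym (f : Cell → Cell) : Prop :=
  ∃ (t : Cell) (a b s : Bool), ∀ p : Cell,
    f p = (t.1 + (if a then (if s then p.2 else p.1) else -(if s then p.2 else p.1)),
           t.2 + (if b then (if s then p.1 else p.2) else -(if s then p.1 else p.2)))

/-- Two subsets of ℤ² are congruent if one is the image of the other under a symmetry. -/
def PolyCongruent (A B : Set Cell) : Prop := ∃ f, IsSym f ∧ f '' A = B

/-- `Ancestor P Q` (written P ⊑ Q): `Q` contains a subset congruent to `P`. -/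
def Ancestor (P Q : Set Cell) : Prop := ∃ S, S ⊆ Q ∧ PolyCongruent P S

/-- `Simpler S T` (written S ⪯ T): every member of `T` has an ancestor in `S`. -/
def Simpler (S T : Set (Set Cell)) : Prop := ∀ Q ∈ T, ∃ P ∈ S, Ancestor P Q

/-- A team: a set of polyominoes no member of which is an ancestor of another member. -/
def IsTeam (F : Set (Set Cell)) : Prop :=
  (∀ P ∈ F, IsPolyomino P) ∧ ∀ P ∈ F, ∀ Q ∈ F, P ≠ Q → ¬ Ancestor P Q

/-- The cells marked so far, given the list of the maker's moves and
the list of the breaker's (pairs of) moves. -/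
def markedCells (ms : List Cell) (bs : List (Cell × Cell)) : Set Cell :=
  {c | c ∈ ms ∨ ∃ p ∈ bs, c = p.1 ∨ c = p.2}

/-- Maker strategy: from the maker's past moves and the breaker's past moves,
produce the maker's next mark. -/
abbrev MStrategy := List Cell → List (Cell × Cell) → Cell

/-- Breaker strategy: from the maker's moves so far (including his latest one) and the
breaker's past moves, produce the breaker's next two marks. -/
abbrev BStrategy := List Cell → List (Cell × Cell) → Cell × Cell

/-- A legal maker strategy always marks a previously unmarked cell. -/
def MLegal (σ : MStrategy) : Prop := ∀ ms bs, σ ms bs ∉ markedCells ms bs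

/-- A legal breaker strategy always marks two distinct previously unmarked cells. -/
def BLegal (τ : BStrategy) : Prop :=
  ∀ ms bs, (τ ms bs).1 ≠ (τ ms bs).2 ∧
    (τ ms bs).1 ∉ markedCells ms bs ∧ (τ ms bs).2 ∉ markedCells ms bs

/-- The lists of moves after `n` full rounds of the weak (1,2)-achievement game,
the maker moving first in each round. -/
def play (σ : MStrategy) (τ : BStrategy) : ℕ → List Cell × List (Cell × Cell)
  | 0 => ([], [])
  | n + 1 =>
      let p := play σ τ n
      let mv := σ p.1 p.2
      (p.1 ++ [mv], p.2 ++ [τ (p.1 ++ [mv]) p.2])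

/-- The set of cells marked by the maker during the first `n` rounds. -/
def makerSet (σ : MStrategy) (τ : BStrategy) (n : ℕ) : Set Cell :=
  {c | c ∈ (play σ τ n).1}

/-- The maker achieves `F` in the play of `σ` against `τ`: at some finite stage his
marked cells contain a subset congruent to a member of `F`. -/
def Achieves (F : Set (Set Cell)) (σ : MStrategy) (τ : BStrategy) : Prop :=
  ∃ n, ∃ Q ∈ F, Ancestor Q (makerSet σ τ n)

/-- A (bounded) set of polyominoes is a winner of the weak (1,2)-achievement game if the
maker has a legal strategy achieving it against every legal breaker strategy. -/
def GameWinner (F : Set (Set Cell)) : Prop :=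
  ∃ σ, MLegal σ ∧ ∀ τ, BLegal τ → Achieves F σ τ

/-- A set of polyominoes is bounded if all its members are finite. -/
def Bounded (F : Set (Set Cell)) : Prop := ∀ P ∈ F, P.Finite

/-- `G` is a bounded restriction of `T`: `G = {F_P : P ∈ T}` for a choice of a finite
polyomino ancestor `F_P ⊑ P` for each `P ∈ T`. -/
def BoundedRestriction (T G : Set (Set Cell)) : Prop :=
  ∃ f : Set Cell → Set Cell,
    (∀ P ∈ T, (f P).Finite ∧ IsPolyomino (f P) ∧ Ancestor (f P) P) ∧ G = f '' T

/-- Winner for a possibly unbounded set of polyominoes: a bounded set is a winner if the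
maker can achieve it; an unbounded set is a winner if every bounded restriction is. -/
def Winner (F : Set (Set Cell)) : Prop :=
  (Bounded F ∧ GameWinner F) ∨
  (¬ Bounded F ∧ ∀ G, BoundedRestriction F G → GameWinner G)

/-- The skinny polyomino `S_n`: `n` cells in a horizontal row. -/
def Srow (n : ℕ) : Set Cell := {p | 0 ≤ p.1 ∧ p.1 < (n : ℤ) ∧ p.2 = 0}

/-- The one-way infinite skinny polyomino `S_∞`. -/
def Sinf : Set Cell := {p | 0 ≤ p.1 ∧ p.2 = 0}

/-- The L-tromino `L_2`. -/
def L2 : Set Cell := {(0, 0), (1, 0), (1, 1)}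

/-- The L-tetromino `L_3`. -/
def L3 : Set Cell := {(0, 0), (1, 0), (2, 0), (2, 1)}

/-- The T-tetromino `T_2`. -/
def T2 : Set Cell := {(0, 0), (1, 0), (2, 0), (1, 1)}

/-- The 2×2 square tetromino `C_2`. -/
def C2 : Set Cell := {(0, 0), (1, 0), (0, 1), (1, 1)}

/-- The S-tetromino `Z_2`. -/
def Z2 : Set Cell := {(0, 0), (1, 0), (1, 1), (2, 1)}

/-- `C_n`: a horizontal row of `n` cells plus the cells above its two end cells. -/
def Cpoly (n : ℕ) : Set Cell :=
  {p | 0 ≤ p.1 ∧ p.1 < (n : ℤ) ∧ p.2 = 0} ∪ {(0, 1), ((n : ℤ) - 1, 1)}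

/-- `Z_n`: a horizontal row of `n` cells plus the cell above one end cell and the cell
below the other end cell. -/
def Zpoly (n : ℕ) : Set Cell :=
  {p | 0 ≤ p.1 ∧ p.1 < (n : ℤ) ∧ p.2 = 0} ∪ {(0, 1), ((n : ℤ) - 1, -1)}

/-- A polyomino is skinny if all its cells lie in one row or one column. -/
def Skinny (P : Set Cell) : Prop :=
  (∃ r, ∀ p ∈ P, p.2 = r) ∨ (∃ c, ∀ p ∈ P, p.1 = c)

/-- A 2-paving: an irreflexive symmetric relation on cells in which every cell is
related to at most two other cells. -/
def TwoPaving (R : Cell → Cell → Prop) : Prop :=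
  (∀ a, ¬ R a a) ∧ (∀ a b, R a b → R b a) ∧
  ∀ a, ∃ b c, ∀ d, R a d → d = b ∨ d = c

/-- The paving strategy based on `R`: a legal breaker strategy that marks every currently
unmarked cell related by `R` to the maker's last move. -/
def PavingStrategy (R : Cell → Cell → Prop) (τ : BStrategy) : Prop :=
  BLegal τ ∧ ∀ ms bs, ∀ last ∈ ms.getLast?, ∀ c, R last c →
    c ∉ markedCells ms bs → (c = (τ ms bs).1 ∨ c = (τ ms bs).2)

/-- `Q` is killed by `R`: every subset of ℤ² congruent to `Q` contains two related cells. -/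
def Killed (R : Cell → Cell → Prop) (Q : Set Cell) : Prop :=
  ∀ S : Set Cell, PolyCongruent Q S → ∃ a ∈ S, ∃ b ∈ S, R a b

/-- The unbounded team `W = {S_∞, T_2} ∪ {C_n : n ≥ 2} ∪ {Z_n : n ≥ 2}`. -/
def Wteam : Set (Set Cell) :=
  {Sinf, T2} ∪ {P | ∃ n, 2 ≤ n ∧ P = Cpoly n} ∪ {P | ∃ n, 2 ≤ n ∧ P = Zpoly n}

/-!
The breaker wins by pairing. Cut the board into the 2×2 blocks `{2i-1, 2i} × {2j-1, 2j}`
and relate two cells when they are adjacent inside one block; every cell then has exactly two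
partners, and the breaker answers each move of the maker by marking its unmarked partners.
The maker's cells never contain a related pair, and a connected set without related pairs can
only use adjacencies that stay inside one block of the grid shifted by `(1, 1)`, so it fits in a
2×2 square and has at most four cells. For an unbounded family it suffices to exhibit one bounded
restriction that is a loser: cut a five-cell polyomino out of each member.
-/

lemma Adjacent.symm {a b : Cell} (h : Adjacent a b) : Adjacent b a := by
  unfold Adjacent at *; omega

lemma not_adjacent_self (a : Cell) : ¬ Adjacent a a := by
  unfold Adjacent; omega

section Symmetry

variable {f : Cell → Cell}

lemma IsSym.injective (hf : IsSym f) : Function.Injective f := by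
  obtain ⟨t, a, b, s, hf⟩ := hf
  intro p q hpq
  rw [hf p, hf q] at hpq
  rcases a <;> rcases b <;> rcases s <;>
    simp only [Bool.false_eq_true, if_true, if_false, Prod.ext_iff] at hpq ⊢ <;> omega

lemma IsSym.adjacent_iff (hf : IsSym f) (p q : Cell) : Adjacent (f p) (f q) ↔ Adjacent p q := by
  obtain ⟨t, a, b, s, hf⟩ := hf
  rw [hf p, hf q]
  unfold Adjacent
  rcases a <;> rcases b <;> rcases s <;> simp <;> omega

lemma isSym_id : IsSym id :=
  ⟨(0, 0), true, true, false, fun p => by simp⟩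

lemma IsPolyomino.image {P : Set Cell} (hP : IsPolyomino P) (hf : IsSym f) :
    IsPolyomino (f '' P) := by
  refine ⟨hP.1.image f, ?_⟩
  rintro _ ⟨p, hp, rfl⟩ _ ⟨q, hq, rfl⟩
  refine Relation.ReflTransGen.lift f ?_ _ _ (hP.2 p hp q hq)
  rintro u v ⟨hu, hv, huv⟩
  exact ⟨Set.mem_image_of_mem f hu, Set.mem_image_of_mem f hv, (hf.adjacent_iff u v).2 huv⟩

end Symmetry

lemma PolyCongruent.encard_eq {A B : Set Cell} (h : PolyCongruent A B) : B.encard = A.encard := by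
  obtain ⟨f, hf, rfl⟩ := h
  exact hf.injective.encard_image A

lemma PolyCongruent.isPolyomino {A B : Set Cell} (h : PolyCongruent A B) (hA : IsPolyomino A) :
    IsPolyomino B := by
  obtain ⟨f, hf, rfl⟩ := h
  exact hA.image hf

lemma Ancestor.of_subset {P Q : Set Cell} (h : P ⊆ Q) : Ancestor P Q :=
  ⟨P, h, id, isSym_id, Set.image_id P⟩

section Growth

lemma isPolyomino_singleton (a : Cell) : IsPolyomino {a} := by
  refine ⟨Set.singleton_nonempty a, ?_⟩
  rintro x rfl y rfl
  exact Relation.ReflTransGen.refl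

lemma IsPolyomino.insert_of_adjacent {T : Set Cell} (hT : IsPolyomino T) {x y : Cell}
    (hx : x ∈ T) (hxy : Adjacent x y) : IsPolyomino (insert y T) := by
  have hT' : ∀ u ∈ T, ∀ v ∈ T, Relation.ReflTransGen
      (fun s t => s ∈ insert y T ∧ t ∈ insert y T ∧ Adjacent s t) u v :=
    fun u hu v hv => Relation.ReflTransGen.mono (fun s t ⟨hs, ht, hst⟩ =>
      ⟨Set.mem_insert_of_mem y hs, Set.mem_insert_of_mem y ht, hst⟩) u v (hT.2 u hu v hv)
  have hxy' := Relation.ReflTransGen.single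
    (r := fun s t => s ∈ insert y T ∧ t ∈ insert y T ∧ Adjacent s t)
    ⟨Set.mem_insert_of_mem y hx, Set.mem_insert y T, hxy⟩
  have hyx' := Relation.ReflTransGen.single
    (r := fun s t => s ∈ insert y T ∧ t ∈ insert y T ∧ Adjacent s t)
    ⟨Set.mem_insert y T, Set.mem_insert_of_mem y hx, hxy.symm⟩
  refine ⟨Set.insert_nonempty y T, ?_⟩
  rintro s (rfl | hs) t (rfl | ht)
  · exact Relation.ReflTransGen.refl
  · exact hyx'.trans (hT' x hx t ht)
  · exact (hT' s hs x hx).trans hxy'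
  · exact hT' s hs t ht

lemma IsPolyomino.exists_adjacent_notMem {P T : Set Cell} (hP : IsPolyomino P) (hTP : T ⊆ P)
    (hT : T.Nonempty) (hPT : ¬ P ⊆ T) : ∃ x ∈ T, ∃ y ∈ P, y ∉ T ∧ Adjacent x y := by
  obtain ⟨a, ha⟩ := hT
  obtain ⟨b, hbP, hbT⟩ := Set.not_subset.mp hPT
  induction hP.2 a (hTP ha) b hbP with
  | refl => exact absurd ha hbT
  | @tail c b _ hcb ih =>
    by_cases hcT : c ∈ T
    · exact ⟨c, hcT, b, hcb.2.1, hbT, hcb.2.2⟩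
    · exact ih hcb.1 hcT

lemma IsPolyomino.exists_subset_isPolyomino_encard_eq {P : Set Cell} (hP : IsPolyomino P) {k : ℕ}
    (hk : 1 ≤ k) (hkP : k ≤ P.encard) : ∃ T ⊆ P, IsPolyomino T ∧ T.encard = k := by
  induction k, hk using Nat.le_induction with
  | base =>
    obtain ⟨a, ha⟩ := hP.1
    exact ⟨{a}, Set.singleton_subset_iff.mpr ha, isPolyomino_singleton a, by simp⟩
  | succ k _ ih =>
    obtain ⟨T, hTP, hT, hTk⟩ := ih (le_trans (by simp) hkP)
    have hPT : ¬ P ⊆ T := fun h => by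
      have := hkP.trans (Set.encard_mono h)
      rw [hTk, Nat.cast_le] at this
      omega
    obtain ⟨x, hx, y, hyP, hyT, hxy⟩ := hP.exists_adjacent_notMem hTP hT.1 hPT
    refine ⟨insert y T, Set.insert_subset hyP hTP, hT.insert_of_adjacent hx hxy, ?_⟩
    rw [Set.encard_insert_of_notMem hyT, hTk]
    norm_cast

end Growth

section Paving

lemma markedCells_finite (ms : List Cell) (bs : List (Cell × Cell)) :
    (markedCells ms bs).Finite := by
  refine (ms ++ bs.map Prod.fst ++ bs.map Prod.snd).finite_toSet.subset ?_
  rintro c (hc | ⟨p, hp, rfl | rfl⟩)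
  exacts [List.mem_append_left _ (List.mem_append_left _ hc),
    List.mem_append_left _ (List.mem_append_right _ (List.mem_map_of_mem hp)),
    List.mem_append_right _ (List.mem_map_of_mem hp)]

lemma markedCells_mono {ms ms' : List Cell} {bs bs' : List (Cell × Cell)} (hms : ms ⊆ ms')
    (hbs : bs ⊆ bs') : markedCells ms bs ⊆ markedCells ms' bs' := by
  rintro c (hc | ⟨p, hp, hcp⟩)
  exacts [Or.inl (hms hc), Or.inr ⟨p, hbs hp, hcp⟩]

lemma exists_pair_notMem_of_finite {α : Type*} [Infinite α] {M : Set α} (hM : M.Finite)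
    (b c : α) :
    ∃ x y, x ≠ y ∧ x ∉ M ∧ y ∉ M ∧ ∀ d, (d = b ∨ d = c) → d ∉ M → d = x ∨ d = y := by
  obtain ⟨x, hxM, hbx⟩ : ∃ x ∉ M, b ∉ M → b = x := by
    by_cases hb : b ∈ M
    · obtain ⟨x, hx⟩ := hM.exists_notMem
      exact ⟨x, hx, absurd hb⟩
    · exact ⟨b, hb, fun _ => rfl⟩
  obtain ⟨y, hyM, hyx, hcy⟩ : ∃ y ∉ M, y ≠ x ∧ (c ∉ M → c = x ∨ c = y) := by
    by_cases hc : c ∉ M ∧ c ≠ x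
    · exact ⟨c, hc.1, hc.2, fun _ => Or.inr rfl⟩
    · obtain ⟨y, hy⟩ := (hM.insert x).exists_notMem
      refine ⟨y, fun h => hy (Set.mem_insert_of_mem x h), fun h => hy (h ▸ Set.mem_insert x M),
        fun hcM => Or.inl (not_not.mp fun h => hc ⟨hcM, h⟩)⟩
  refine ⟨x, y, hyx.symm, hxM, hyM, ?_⟩
  rintro d (rfl | rfl) hdM
  exacts [Or.inl (hbx hdM), hcy hdM]

variable {R : Cell → Cell → Prop}

theorem exists_pavingStrategy (hR : ∀ a, ∃ b c, ∀ d, R a d → d = b ∨ d = c) :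
    ∃ τ, PavingStrategy R τ := by
  have hmove : ∀ ms bs, ∃ pr : Cell × Cell, pr.1 ≠ pr.2 ∧ pr.1 ∉ markedCells ms bs ∧
      pr.2 ∉ markedCells ms bs ∧ ∀ last ∈ ms.getLast?, ∀ c, R last c →
        c ∉ markedCells ms bs → c = pr.1 ∨ c = pr.2 := by
    intro ms bs
    obtain ⟨b, c, hbc⟩ :
        ∃ b c, ∀ last ∈ ms.getLast?, ∀ d, R last d → d = b ∨ d = c := by
      cases ms.getLast? with
      | none => exact ⟨0, 0, by simp⟩
      | some a =>
        obtain ⟨b, c, h⟩ := hR a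
        exact ⟨b, c, by simpa using h⟩
    obtain ⟨x, y, hxy, hx, hy, hcover⟩ :=
      exists_pair_notMem_of_finite (markedCells_finite ms bs) b c
    exact ⟨(x, y), hxy, hx, hy, fun last hl d hd => hcover d (hbc last hl d hd)⟩
  choose τ hτ using hmove
  exact ⟨τ, fun ms bs => ⟨(hτ ms bs).1, (hτ ms bs).2.1, (hτ ms bs).2.2.1⟩,
    fun ms bs => (hτ ms bs).2.2.2⟩

variable {τ : BStrategy}

lemma PavingStrategy.partners_marked_append (hτ : PavingStrategy R τ) {M : List Cell}
    {B : List (Cell × Cell)} (mv : Cell)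
    (h : ∀ p ∈ M, ∀ d, R p d → d ∈ markedCells M B) :
    ∀ p ∈ M ++ [mv], ∀ d, R p d →
      d ∈ markedCells (M ++ [mv]) (B ++ [τ (M ++ [mv]) B]) := by
  intro p hp d hpd
  by_cases hd : d ∈ markedCells (M ++ [mv]) B
  · exact markedCells_mono (List.Subset.refl _) (List.subset_append_left _ _) hd
  rcases List.mem_append.mp hp with hp | hp
  · exact absurd (markedCells_mono (List.subset_append_left M [mv]) (List.Subset.refl B)
      (h p hp d hpd)) hd
  · rw [List.mem_singleton.mp hp] at hpd
    exact Or.inr ⟨_, List.mem_append_right _ (List.mem_singleton_self _),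
      hτ.2 _ B mv (by simp) d hpd hd⟩

lemma PavingStrategy.partners_marked (hτ : PavingStrategy R τ) (σ : MStrategy) (n : ℕ) :
    ∀ p ∈ (play σ τ n).1, ∀ d, R p d →
      d ∈ markedCells (play σ τ n).1 (play σ τ n).2 := by
  induction n with
  | zero => simp [play]
  | succ n ih => exact hτ.partners_marked_append _ ih

lemma PavingStrategy.makerSet_not_rel (hR : TwoPaving R) (hτ : PavingStrategy R τ)
    {σ : MStrategy} (hσ : MLegal σ) (n : ℕ) :
    ∀ a ∈ makerSet σ τ n, ∀ b ∈ makerSet σ τ n, ¬ R a b := by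
  induction n with
  | zero => simp [makerSet, play]
  | succ n ih =>
    have hfresh := hσ (play σ τ n).1 (play σ τ n).2
    have hmarked := hτ.partners_marked σ n
    simp only [makerSet, play, Set.mem_ofPred_eq, List.mem_append, List.mem_singleton]
    rintro a (ha | rfl) b (hb | rfl) hab
    · exact ih a ha b hb hab
    · exact hfresh (hmarked a ha _ hab)
    · exact hfresh (hmarked b hb _ (hR.2.1 _ _ hab))
    · exact hR.1 _ hab

theorem not_gameWinner_of_killed (hR : TwoPaving R) {F : Set (Set Cell)}
    (hF : ∀ Q ∈ F, Killed R Q) : ¬ GameWinner F := by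
  rintro ⟨σ, hσ, hwin⟩
  obtain ⟨τ, hτ⟩ := exists_pavingStrategy hR.2.2
  obtain ⟨n, Q, hQ, S, hS, hQS⟩ := hwin τ hτ.1
  obtain ⟨a, ha, b, hb, hab⟩ := hF Q hQ S hQS
  exact hτ.makerSet_not_rel hR hσ n a (hS ha) b (hS hb) hab

end Paving

section BlockPairing

/-- `(x + 1) / 2` (rounding down) indexes the pair `{2i-1, 2i}` containing `x`. -/
def BlockPair (a b : Cell) : Prop :=
  Adjacent a b ∧ (a.1 + 1) / 2 = (b.1 + 1) / 2 ∧ (a.2 + 1) / 2 = (b.2 + 1) / 2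

lemma twoPaving_blockPair : TwoPaving BlockPair := by
  refine ⟨fun a h => not_adjacent_self a h.1,
    fun a b ⟨hab, h1, h2⟩ => ⟨hab.symm, h1.symm, h2.symm⟩,
    fun a => ⟨(a.1 + 2 * (a.1 % 2) - 1, a.2), (a.1, a.2 + 2 * (a.2 % 2) - 1), ?_⟩⟩
  rintro d ⟨had, h1, h2⟩
  unfold Adjacent at had
  simp only [Prod.ext_iff]
  omega

lemma IsPolyomino.encard_le_four_of_not_blockPair {S : Set Cell} (hS : IsPolyomino S)
    (hfree : ∀ a ∈ S, ∀ b ∈ S, ¬ BlockPair a b) : S.encard ≤ 4 := by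
  obtain ⟨⟨a, ha⟩, hconn⟩ := hS
  have hbox : ∀ b ∈ S, b.1 / 2 = a.1 / 2 ∧ b.2 / 2 = a.2 / 2 := by
    intro b hb
    induction hconn a ha b hb with
    | refl => exact ⟨rfl, rfl⟩
    | @tail c b _ hcb ih =>
      obtain ⟨hc, hb, hadj⟩ := hcb
      have hnot : ¬ BlockPair c b := hfree c hc b hb
      obtain ⟨ih1, ih2⟩ := ih hc
      unfold BlockPair Adjacent at hnot
      unfold Adjacent at hadj
      omega
  set m := 2 * (a.1 / 2)
  set n := 2 * (a.2 / 2)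
  have hsub : S ⊆ {(m, n), (m + 1, n), (m, n + 1), (m + 1, n + 1)} := by
    intro b hb
    have := hbox b hb
    simp only [Set.mem_insert_iff, Set.mem_singleton_iff, Prod.ext_iff]
    omega
  calc S.encard ≤ _ := Set.encard_mono hsub
    _ ≤ 4 := by
      grw [Set.encard_insert_le, Set.encard_insert_le, Set.encard_insert_le,
        Set.encard_singleton]
      norm_num

lemma killed_blockPair_of_five_le {Q : Set Cell} (hQ : IsPolyomino Q) (h5 : 5 ≤ Q.encard) :
    Killed BlockPair Q := by
  intro S hQS
  by_contra! hfree
  have h4 := (hQS.isPolyomino hQ).encard_le_four_of_not_blockPair hfree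
  rw [hQS.encard_eq] at h4
  have := h5.trans h4
  norm_num at this

lemma not_gameWinner_of_five_le {F : Set (Set Cell)} (hpoly : ∀ P ∈ F, IsPolyomino P)
    (h5 : ∀ P ∈ F, 5 ≤ P.encard) : ¬ GameWinner F :=
  not_gameWinner_of_killed twoPaving_blockPair fun Q hQ =>
    killed_blockPair_of_five_le (hpoly Q hQ) (h5 Q hQ)

end BlockPairing

/-- every set of polyominoes all of whose members have size 5 or larger is
a loser. -/
theorem stmt12 (F : Set (Set Cell)) (hpoly : ∀ P ∈ F, IsPolyomino P)
    (h5 : ∀ P ∈ F, 5 ≤ P.encard) : ¬ Winner F := by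
  rintro (⟨-, hwin⟩ | ⟨-, hrestr⟩)
  · exact not_gameWinner_of_five_le hpoly h5 hwin
  choose! f hfP hfpoly hfcard using fun P hP =>
    (hpoly P hP).exists_subset_isPolyomino_encard_eq (k := 5) (by norm_num)
      (by exact_mod_cast h5 P hP)
  have hfin : ∀ P ∈ F, (f P).Finite := fun P hP => Set.finite_of_encard_eq_coe (hfcard P hP)
  refine not_gameWinner_of_five_le (F := f '' F) ?_ ?_
    (hrestr _ ⟨f, fun P hP => ⟨hfin P hP, hfpoly P hP, .of_subset (hfP P hP)⟩, rfl⟩)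
  · rintro _ ⟨P, hP, rfl⟩
    exact hfpoly P hP
  · rintro _ ⟨P, hP, rfl⟩
    rw [hfcard P hP]
    rfl
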